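/- arXiv:2309.14542 — 2 statements merged into one kernel-verified Lean document; each statement's English description precedes it below -/
import Mathlib

section
/- Let R be an integral domain and R' a ring extension of R such that every element of R' is integral over R and no nonzero element of R is a zero divisor in R'. Then the localization of R' at the multiplicative set R \ {0} is canonically isomorphic to the total ring of fractions Q(R') of R'. -/
/-! A nonzerodivisor `s` of `R'` that is integral over the domain `R` satisfies a polynomial with
nonzero constant term `c`, so `s` divides `c`. Hence every nonzerodivisor of `R'` divides an
element of `R \ {0}`, and inverting `R \ {0}` already inverts all of them. -/

open nonZeroDivisors

theorem IsLocalization.isFractionRing_of_isAlgebraic {R S L : Type*}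
    [CommRing R] [NoZeroDivisors R] [CommRing S] [Algebra R S]
    [Algebra.IsAlgebraic R S] [CommRing L] [Algebra S L]
    (hle : Submonoid.map (algebraMap R S) R⁰ ≤ S⁰)
    [IsLocalization (Submonoid.map (algebraMap R S) R⁰) L] : IsFractionRing S L :=
  IsLocalization.of_le_of_exists_dvd _ S⁰ hle fun s hs ↦
    have ⟨r, hr, hdvd⟩ := (Algebra.IsAlgebraic.isAlgebraic s).exists_nonzero_dvd hs
    ⟨algebraMap R S r, ⟨r, mem_nonZeroDivisors_of_ne_zero hr, rfl⟩, hdvd⟩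

theorem localization_at_base_nonzero_is_fraction_ring_general
    {R R' : Type*} [CommRing R] [IsDomain R] [CommRing R'] [Algebra R R']
    (hint : Algebra.IsIntegral R R')
    (hnzd : ∀ r : R, r ≠ 0 → algebraMap R R' r ∈ nonZeroDivisors R') :
    IsFractionRing R'
      (Localization (Submonoid.map (algebraMap R R') (nonZeroDivisors R))) := by
  have hle : Submonoid.map (algebraMap R R') R⁰ ≤ R'⁰ := by
    rintro _ ⟨r, hr, rfl⟩
    exact hnzd r (nonZeroDivisors.ne_zero hr)
  exact IsLocalization.isFractionRing_of_isAlgebraic hle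

/-- Let `R` be an integral domain and `R'` a ring extension of `R` such that
every element of `R'` is integral over `R` and no nonzero element of `R` is a zero divisor
in `R'`. Then the localization of `R'` at the multiplicative set `R \ {0}` is canonically
isomorphic to (i.e. *is*) the total ring of fractions `Q(R')` of `R'`. -/
theorem localization_at_base_nonzero_is_fraction_ring
    {R R' : Type*} [CommRing R] [IsDomain R] [CommRing R'] [Algebra R R']
    (hinj : Function.Injective (algebraMap R R'))
    (hint : Algebra.IsIntegral R R')
    (hnzd : ∀ r : R, r ≠ 0 → algebraMap R R' r ∈ nonZeroDivisors R') :
    IsFractionRing R'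
      (Localization (Submonoid.map (algebraMap R R') (nonZeroDivisors R))) :=
  localization_at_base_nonzero_is_fraction_ring_general hint hnzd
end

section
/- Let K'/K be a finite Galois field extension with Galois group G, and let R be a commutative K-algebra. Then the subring of G-fixed elements of R ⊗_K K' (where G acts via the second tensor factor) equals R ⊗ 1, i.e. (R ⊗_K K')^G = R. -/
/-!
Write `s ∈ R ⊗[K] K'` in a `K`-basis `(bᵢ)` of `R` as `∑ᵢ bᵢ ⊗ cᵢ`. Then `id ⊗ σ` acts on the
coordinates, `s ↦ ∑ᵢ bᵢ ⊗ σ cᵢ`, so `s` is `Gal(K'/K)`-invariant iff every `cᵢ` is, i.e. iff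
every `cᵢ` lies in `K`, i.e. iff `s ∈ R ⊗ K`.
-/

open TensorProduct

namespace TensorProduct

variable {R M N N' ι : Type*} [CommSemiring R] [AddCommMonoid M] [Module R M]
  [AddCommMonoid N] [Module R N] [AddCommMonoid N'] [Module R N'] [DecidableEq ι]
  (b : Module.Basis ι R M)

lemma equivFinsuppOfBasisLeft_lTensor_apply (f : N →ₗ[R] N') (x : M ⊗[R] N) (i : ι) :
    equivFinsuppOfBasisLeft b (f.lTensor M x) i = f (equivFinsuppOfBasisLeft b x i) := by
  induction x with
  | zero => simp
  | tmul m n => simp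
  | add x y hx hy => simp only [map_add, Finsupp.add_apply, hx, hy]

lemma lTensor_apply_eq_self_iff (f : N →ₗ[R] N) (x : M ⊗[R] N) :
    f.lTensor M x = x ↔
      ∀ i, f (equivFinsuppOfBasisLeft b x i) = equivFinsuppOfBasisLeft b x i := by
  simp only [← equivFinsuppOfBasisLeft_lTensor_apply, ← Finsupp.ext_iff,
    (equivFinsuppOfBasisLeft b).injective.eq_iff]

lemma mem_range_lTensor_iff (f : N →ₗ[R] N') (x : M ⊗[R] N') :
    x ∈ LinearMap.range (f.lTensor M) ↔
      ∀ i, equivFinsuppOfBasisLeft b x i ∈ LinearMap.range f := by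
  constructor
  · rintro ⟨y, rfl⟩ i
    exact ⟨_, (equivFinsuppOfBasisLeft_lTensor_apply b f y i).symm⟩
  · intro hx
    rw [← (equivFinsuppOfBasisLeft b).symm_apply_apply x, equivFinsuppOfBasisLeft_symm_apply]
    refine Submodule.finsuppSum_mem _ _ _ _ fun i _ => ?_
    obtain ⟨n, hn⟩ := hx i
    exact ⟨b i ⊗ₜ n, by simp [hn]⟩

end TensorProduct

lemma Algebra.TensorProduct.mem_range_includeLeft_iff {R A B : Type*} [CommSemiring R]
    [Semiring A] [Algebra R A] [Semiring B] [Algebra R B] (x : A ⊗[R] B) :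
    x ∈ (includeLeft : A →ₐ[R] A ⊗[R] B).range ↔
      x ∈ LinearMap.range ((Algebra.linearMap R B).lTensor A) := by
  have : (includeLeft : A →ₐ[R] A ⊗[R] B).toLinearMap =
      (Algebra.linearMap R B).lTensor A ∘ₗ (_root_.TensorProduct.rid R A).symm.toLinearMap := by
    ext; simp
  rw [← LinearMap.range_comp_of_range_eq_top _
    (LinearEquiv.range (_root_.TensorProduct.rid R A).symm), ← this]
  rfl

lemma IsGalois.mem_range_lTensor_algebraMap_iff_fixed {K K' M : Type*} [Field K] [Field K']
    [Algebra K K'] [IsGalois K K'] [AddCommGroup M] [Module K M] (x : M ⊗[K] K') :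
    x ∈ LinearMap.range ((Algebra.linearMap K K').lTensor M) ↔
      ∀ σ : K' ≃ₐ[K] K', σ.toLinearMap.lTensor M x = x := by
  classical
  let b := Module.Basis.ofVectorSpace K M
  simp only [mem_range_lTensor_iff b, lTensor_apply_eq_self_iff b]
  rw [forall_comm]
  exact forall_congr' fun i => InfiniteGalois.mem_range_algebraMap_iff_fixed _

theorem fixed_points_of_galois_action_on_tensor_general
    (K K' : Type*) [Field K] [Field K'] [Algebra K K']
    [IsGalois K K']
    (R : Type*) [CommRing R] [Algebra K R]
    (s : R ⊗[K] K') :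
    (∀ σ : K' ≃ₐ[K] K',
        Algebra.TensorProduct.map (AlgHom.id K R) σ.toAlgHom s = s) ↔
      s ∈ (Algebra.TensorProduct.includeLeft : R →ₐ[K] R ⊗[K] K').range := by
  rw [Algebra.TensorProduct.mem_range_includeLeft_iff,
    IsGalois.mem_range_lTensor_algebraMap_iff_fixed]
  exact Iff.rfl

/-- Let `K'/K` be a finite Galois field extension with Galois group `G`, and
`R` a commutative `K`-algebra. Then the `G`-fixed elements of `R ⊗[K] K'` (with `G` acting via
the second tensor factor) are exactly the elements of `R ⊗ 1`, i.e. `(R ⊗_K K')^G = R`. -/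
theorem fixed_points_of_galois_action_on_tensor
    (K K' : Type*) [Field K] [Field K'] [Algebra K K']
    [FiniteDimensional K K'] [IsGalois K K']
    (R : Type*) [CommRing R] [Algebra K R]
    (s : R ⊗[K] K') :
    (∀ σ : K' ≃ₐ[K] K',
        Algebra.TensorProduct.map (AlgHom.id K R) σ.toAlgHom s = s) ↔
      s ∈ (Algebra.TensorProduct.includeLeft : R →ₐ[K] R ⊗[K] K').range :=
  fixed_points_of_galois_action_on_tensor_general K K' R s
end
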